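/- For any matrix C ∈ SO₀(2,1), one has (c₁₁ − 1)² = (c₂₂ − c₃₃)² + (c₂₃ + c₃₂)². -/

import Mathlib

open Matrix
noncomputable def Imat : Matrix (Fin 3) (Fin 3) ℝ := diagonal ![-1, 1, 1]
noncomputable def amat : Matrix (Fin 3) (Fin 3) ℝ := !![0,1,0; 1,0,0; 0,0,0]
noncomputable def bmat : Matrix (Fin 3) (Fin 3) ℝ := !![0,0,1; 0,0,0; 1,0,0]
noncomputable def cmat : Matrix (Fin 3) (Fin 3) ℝ := !![0,0,0; 0,0,-1; 0,1,0]
noncomputable def rot2 (η : ℝ) : Matrix (Fin 2) (Fin 2) ℝ :=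
  !![Real.cos η, -Real.sin η; Real.sin η, Real.cos η]
noncomputable def Kmat (η : ℝ) : Matrix (Fin 3) (Fin 3) ℝ :=
  !![1,0,0; 0,Real.cos η,-Real.sin η; 0,Real.sin η,Real.cos η]
def inSO21 (C : Matrix (Fin 3) (Fin 3) ℝ) : Prop :=
  C⁻¹ = Imat * Cᵀ * Imat ∧ C.det = 1 ∧ 1 ≤ C 0 0

/-!
Writing `I = diag(-1, 1, 1)`, the relation `C⁻¹ = I Cᵀ I` means `C I Cᵀ = I = Cᵀ I C`, so the second
and third rows and the first column of `C` have Minkowski norms `1, 1, -1`; and since `adjugate C = C⁻¹`,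
its top-left entry gives `c₂₂ c₃₃ - c₂₃ c₃₂ = c₁₁`. Expanding `(c₂₂ - c₃₃)² + (c₂₃ + c₃₂)²` and
substituting these four identities yields `c₁₁² - 2 c₁₁ + 1`.
-/

lemma Imat_mul_Imat : Imat * Imat = 1 := by
  rw [Imat, diagonal_mul_diagonal, ← diagonal_one]
  congr 1
  ext i
  fin_cases i <;> norm_num

lemma mul_Imat_mul_apply (A B : Matrix (Fin 3) (Fin 3) ℝ) (i j : Fin 3) :
    (A * Imat * B) i j = -A i 0 * B 0 j + A i 1 * B 1 j + A i 2 * B 2 j := by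
  simp [Imat, mul_apply, Fin.sum_univ_three]

namespace inSO21

variable {C : Matrix (Fin 3) (Fin 3) ℝ}

lemma isUnit_det (hC : inSO21 C) : IsUnit C.det :=
  hC.2.1 ▸ isUnit_one

lemma mul_Imat_mul_transpose (hC : inSO21 C) : C * Imat * Cᵀ = Imat := by
  have h : C * (Imat * Cᵀ * Imat) = 1 := hC.1 ▸ mul_nonsing_inv C hC.isUnit_det
  calc C * Imat * Cᵀ = C * (Imat * Cᵀ * Imat) * Imat := by
        simp only [Matrix.mul_assoc, Imat_mul_Imat, Matrix.mul_one]
    _ = Imat := by rw [h, Matrix.one_mul]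

lemma transpose_mul_Imat_mul (hC : inSO21 C) : Cᵀ * Imat * C = Imat := by
  have h : Imat * Cᵀ * Imat * C = 1 := hC.1 ▸ nonsing_inv_mul C hC.isUnit_det
  calc Cᵀ * Imat * C = Imat * (Imat * Cᵀ * Imat * C) := by
        simp only [← Matrix.mul_assoc, Imat_mul_Imat, Matrix.one_mul]
    _ = Imat := by rw [h, Matrix.mul_one]

lemma row_minkowski_norm (hC : inSO21 C) (i : Fin 3) :
    -C i 0 ^ 2 + C i 1 ^ 2 + C i 2 ^ 2 = Imat i i := by
  rw [← hC.mul_Imat_mul_transpose, mul_Imat_mul_apply]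
  simp only [transpose_apply]
  ring

lemma col_minkowski_norm (hC : inSO21 C) (j : Fin 3) :
    -C 0 j ^ 2 + C 1 j ^ 2 + C 2 j ^ 2 = Imat j j := by
  rw [← hC.transpose_mul_Imat_mul, mul_Imat_mul_apply]
  simp only [transpose_apply]
  ring

lemma adjugate_eq (hC : inSO21 C) : C.adjugate = Imat * Cᵀ * Imat := by
  rw [← hC.1, inv_def, hC.2.1, Ring.inverse_one, one_smul]

lemma minor_zero_zero (hC : inSO21 C) : C 1 1 * C 2 2 - C 1 2 * C 2 1 = C 0 0 := by
  simpa [adjugate_fin_three, Imat] using congr_fun₂ hC.adjugate_eq 0 0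

end inSO21

theorem stmt12 (C : Matrix (Fin 3) (Fin 3) ℝ) (hC : inSO21 C) :
    (C 0 0 - 1) ^ 2 = (C 1 1 - C 2 2) ^ 2 + (C 1 2 + C 2 1) ^ 2 := by
  have row1 := hC.row_minkowski_norm 1
  have row2 := hC.row_minkowski_norm 2
  have col0 := hC.col_minkowski_norm 0
  simp [Imat] at row1 row2 col0
  linear_combination -row1 - row2 - col0 + 2 * hC.minor_zero_zero
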